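/- There exists ε > 0 with the following property. For all real numbers a, b, c ∈ (1−ε, 1+ε), the six-point set {e₁⁺, e₁⁻, e₂⁺, e₂⁻, e₃⁺, e₃⁻} with the symmetric distance function |·| defined by: |eᵢ⁺eᵢ⁻| = 1 for i = 1,2,3; |e₁⁺e₂⁺| = |e₁⁺e₂⁻| = a/√2 and |e₁⁻e₂⁺| = |e₁⁻e₂⁻| = 1/(a√2); |e₂⁺e₃⁺| = |e₂⁺e₃⁻| = b/√2 and |e₂⁻e₃⁺| = |e₂⁻e₃⁻| = 1/(b√2); |e₃⁺e₁⁺| = |e₃⁺e₁⁻| = c/√2 and |e₃⁻e₁⁺| = |e₃⁻e₁⁻| = 1/(c√2); is a metric space (the triangle inequality holds) and satisfies the Ptolemy inequality. Moreover, for each of the three four-point configurations {e₁±, e₂±}, {e₂±, e₃±}, {e₃±, e₁±}, equality holds in the Ptolemy inequality with the pairs eᵢ⁺eᵢ⁻ as diagonals. -/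

import Mathlib

/-!
Distinct points are at distance between `2/3` and `1`: antipodal pairs at distance `1`, the
others at `t/√2` or `1/(t√2)` with `t` close to `1`, hence in `[2/3, 3/4]`. The triangle
inequality follows at once. In a Ptolemy configuration whose diagonals are the antipodal pairs
`eᵢ^±`, `eⱼ^±`, both products of opposite sides are `t/√2 · 1/(t√2) = 1/2`, so equality
`1 · 1 = 1/2 + 1/2` holds; in any other configuration of four distinct points one diagonal is
at most `3/4`, so the product of the diagonals is at most `3/4`, while the right-hand side is at
least `2 · (2/3)² = 8/9`.
-/

/-- The six-point distance function on `{e₁⁺,e₁⁻,e₂⁺,e₂⁻,e₃⁺,e₃⁻}`, modelled on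
`Fin 3 × Bool` (the point `eᵢ^±` is `(i−1, ±)` with `+` as `true`): antipodal pairs have
distance `1`; for the pair of indices `{i, i+1}` (cyclically, with parameters
`a, b, c` attached to indices `1, 2, 3`), the distance is `par i/√2` if the index-`i`
point has sign `+`, and `1/(par i·√2)` if it has sign `−`. -/
noncomputable def exDist (a b c : ℝ) : Fin 3 × Bool → Fin 3 × Bool → ℝ := fun p q =>
  let par : Fin 3 → ℝ := ![a, b, c]
  if p.1 = q.1 then (if p.2 = q.2 then 0 else 1)
  else if q.1 = p.1 + 1 then
    (if p.2 then par p.1 / Real.sqrt 2 else 1 / (par p.1 * Real.sqrt 2))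
  else
    (if q.2 then par q.1 / Real.sqrt 2 else 1 / (par q.1 * Real.sqrt 2))

open Set

section DistanceFunction

variable {X : Type*} {d : X → X → ℝ}

theorem triangle_of_ne_mem_Icc {m : ℝ} (hself : ∀ x, d x x = 0)
    (hd : ∀ x y, x ≠ y → d x y ∈ Icc m (2 * m)) (x y z : X) :
    d x z ≤ d x y + d y z := by
  have hnonneg : ∀ x y, 0 ≤ d x y := fun x y => by
    by_cases hxy : x = y
    · rw [hxy, hself]
    · linarith [(hd x y hxy).1, (hd x y hxy).2]
  by_cases hxy : x = y
  · rw [hxy, hself, zero_add]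
  by_cases hyz : y = z
  · rw [hyz, hself, add_zero]
  by_cases hxz : x = z
  · rw [hxz, hself]; exact add_nonneg (hnonneg _ _) (hnonneg _ _)
  linarith [(hd x z hxz).2, (hd x y hxy).1, (hd y z hyz).1]

theorem ptolemy_of_pairwise_ne (hself : ∀ x, d x x = 0) (hcomm : ∀ x y, d x y = d y x)
    (hnonneg : ∀ x y, 0 ≤ d x y)
    (h : ∀ y₁ y₂ y₃ y₄, y₁ ≠ y₂ → y₁ ≠ y₃ → y₁ ≠ y₄ → y₂ ≠ y₃ → y₂ ≠ y₄ → y₃ ≠ y₄ →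
      d y₁ y₃ * d y₂ y₄ ≤ d y₁ y₂ * d y₃ y₄ + d y₂ y₃ * d y₄ y₁)
    (y₁ y₂ y₃ y₄ : X) :
    d y₁ y₃ * d y₂ y₄ ≤ d y₁ y₂ * d y₃ y₄ + d y₂ y₃ * d y₄ y₁ := by
  have hrhs : 0 ≤ d y₁ y₂ * d y₃ y₄ + d y₂ y₃ * d y₄ y₁ :=
    add_nonneg (mul_nonneg (hnonneg _ _) (hnonneg _ _)) (mul_nonneg (hnonneg _ _) (hnonneg _ _))
  by_cases h13 : y₁ = y₃
  · rw [show d y₁ y₃ = 0 from h13 ▸ hself y₁, zero_mul]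
    exact hrhs
  by_cases h24 : y₂ = y₄
  · rw [show d y₂ y₄ = 0 from h24 ▸ hself y₂, mul_zero]
    exact hrhs
  by_cases h12 : y₁ = y₂
  · rw [h12, hself, zero_mul, zero_add, hcomm y₄]
  by_cases h23 : y₂ = y₃
  · rw [h23, hself, zero_mul, add_zero]
  by_cases h34 : y₃ = y₄
  · rw [h34, hself, mul_zero, zero_add, hcomm y₄, mul_comm]
  by_cases h14 : y₁ = y₄
  · rw [← h14, hself, mul_zero, add_zero, hcomm y₂, hcomm y₃, mul_comm]
  exact h y₁ y₂ y₃ y₄ h12 h13 h14 h23 h24 h34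

end DistanceFunction

lemma sqrt_two_mem_Ioo : √2 ∈ Ioo (1.414 : ℝ) 1.415 :=
  ⟨(Real.lt_sqrt (by norm_num)).2 (by norm_num), (Real.sqrt_lt' (by norm_num)).2 (by norm_num)⟩

lemma div_sqrt_two_mem_Icc {t : ℝ} (ht : |t - 1| < 1 / 20) :
    t / √2 ∈ Icc (2 / 3 : ℝ) (3 / 4) := by
  obtain ⟨hs₁, hs₂⟩ := sqrt_two_mem_Ioo
  obtain ⟨ht₁, ht₂⟩ := abs_lt.1 ht
  have hs : 0 < √2 := by linarith
  constructor
  · rw [le_div_iff₀ hs]; linarith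
  · rw [div_le_iff₀ hs]; linarith

lemma one_div_mul_sqrt_two_mem_Icc {t : ℝ} (ht : |t - 1| < 1 / 20) :
    1 / (t * √2) ∈ Icc (2 / 3 : ℝ) (3 / 4) := by
  obtain ⟨hs₁, hs₂⟩ := sqrt_two_mem_Ioo
  obtain ⟨ht₁, ht₂⟩ := abs_lt.1 ht
  have hts : 0 < t * √2 := by nlinarith
  constructor
  · rw [le_div_iff₀ hts]; nlinarith
  · rw [div_le_iff₀ hts]; nlinarith

lemma ne_zero_of_abs_sub_one_lt {t : ℝ} (ht : |t - 1| < 1) : t ≠ 0 := by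
  rintro rfl
  norm_num at ht

lemma div_sqrt_two_mul_one_div_mul_sqrt_two {t : ℝ} (ht : t ≠ 0) :
    t / √2 * (1 / (t * √2)) = 1 / 2 := by
  field_simp
  norm_num

def antipode {α : Type*} (p : α × Bool) : α × Bool := (p.1, !p.2)

@[simp]
lemma antipode_antipode {α : Type*} (p : α × Bool) : antipode (antipode p) = p := by
  simp [antipode]

lemma eq_or_eq_antipode_of_fst_eq {α : Type*} {p q : α × Bool} (h : p.1 = q.1) :
    q = p ∨ q = antipode p := by
  obtain ⟨i, s⟩ := p
  obtain ⟨j, u⟩ := q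
  cases s <;> cases u <;> simp_all [antipode]

section exDist

variable {a b c : ℝ}

lemma exDist_comm (p q : Fin 3 × Bool) : exDist a b c p q = exDist a b c q p := by
  obtain ⟨i, s⟩ := p
  obtain ⟨j, u⟩ := q
  fin_cases i <;> fin_cases j <;> cases s <;> cases u <;> simp [exDist]

lemma exDist_self (p : Fin 3 × Bool) : exDist a b c p p = 0 := by
  simp [exDist]

lemma exDist_antipode (p : Fin 3 × Bool) : exDist a b c p (antipode p) = 1 := by
  simp [exDist, antipode]

lemma exDist_mul_exDist_antipode (H : ∀ i, ![a, b, c] i ≠ 0) {p q : Fin 3 × Bool}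
    (h : p.1 ≠ q.1) : exDist a b c p q * exDist a b c (antipode p) (antipode q) = 1 / 2 := by
  obtain ⟨i, s⟩ := p
  obtain ⟨j, u⟩ := q
  simp only [ne_eq] at h
  by_cases hij : j = i + 1
  · have hi := div_sqrt_two_mul_one_div_mul_sqrt_two (H i)
    cases s <;> simp_all [exDist, antipode, mul_comm]
  · have hj := div_sqrt_two_mul_one_div_mul_sqrt_two (H j)
    cases u <;> simp_all [exDist, antipode, mul_comm]

lemma exDist_ptolemy_eq_of_fst_ne (H : ∀ i, ![a, b, c] i ≠ 0) {p q : Fin 3 × Bool}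
    (h : p.1 ≠ q.1) :
    exDist a b c p (antipode p) * exDist a b c q (antipode q) =
      exDist a b c p q * exDist a b c (antipode p) (antipode q) +
        exDist a b c q (antipode p) * exDist a b c (antipode q) p := by
  have h' := exDist_mul_exDist_antipode H (p := q) (q := antipode p) (Ne.symm h)
  rw [antipode_antipode] at h'
  rw [exDist_antipode, exDist_antipode, exDist_mul_exDist_antipode H h, h']
  norm_num

variable (H : ∀ i, |![a, b, c] i - 1| < 1 / 20)
include H

lemma exDist_mem_Icc_of_fst_ne {p q : Fin 3 × Bool} (h : p.1 ≠ q.1) :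
    exDist a b c p q ∈ Icc (2 / 3 : ℝ) (3 / 4) := by
  simp only [exDist, if_neg h]
  split_ifs
  all_goals first
    | exact div_sqrt_two_mem_Icc (H _)
    | exact one_div_mul_sqrt_two_mem_Icc (H _)

lemma exDist_mem_Icc_of_ne {p q : Fin 3 × Bool} (h : p ≠ q) :
    exDist a b c p q ∈ Icc (2 / 3 : ℝ) 1 := by
  by_cases hpq : p.1 = q.1
  · obtain rfl | rfl := eq_or_eq_antipode_of_fst_eq hpq
    · exact absurd rfl h
    · rw [exDist_antipode]; norm_num
  · exact Icc_subset_Icc_right (by norm_num) (exDist_mem_Icc_of_fst_ne H hpq)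

lemma exDist_nonneg (p q : Fin 3 × Bool) : 0 ≤ exDist a b c p q := by
  by_cases h : p = q
  · rw [h, exDist_self]
  · linarith [(exDist_mem_Icc_of_ne H h).1]

lemma exDist_eq_zero_iff {p q : Fin 3 × Bool} : exDist a b c p q = 0 ↔ p = q := by
  refine ⟨fun h0 => ?_, fun h => h ▸ exDist_self p⟩
  by_contra h
  linarith [(exDist_mem_Icc_of_ne H h).1]

lemma exDist_triangle (p q r : Fin 3 × Bool) :
    exDist a b c p r ≤ exDist a b c p q + exDist a b c q r :=
  triangle_of_ne_mem_Icc exDist_self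
    (fun _ _ h => Icc_subset_Icc_right (by norm_num) (exDist_mem_Icc_of_ne H h)) p q r

lemma exDist_ptolemy (y₁ y₂ y₃ y₄ : Fin 3 × Bool) :
    exDist a b c y₁ y₃ * exDist a b c y₂ y₄ ≤
      exDist a b c y₁ y₂ * exDist a b c y₃ y₄ +
        exDist a b c y₂ y₃ * exDist a b c y₄ y₁ := by
  refine ptolemy_of_pairwise_ne exDist_self exDist_comm (exDist_nonneg H)
    (fun y₁ y₂ y₃ y₄ h12 h13 h14 h23 h24 h34 => ?_) y₁ y₂ y₃ y₄
  by_cases hdiag : y₃ = antipode y₁ ∧ y₄ = antipode y₂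
  · obtain ⟨rfl, rfl⟩ := hdiag
    have h : y₁.1 ≠ y₂.1 := fun h => by
      obtain rfl | rfl := eq_or_eq_antipode_of_fst_eq h
      exacts [h12 rfl, h23 rfl]
    have H0 : ∀ i, ![a, b, c] i ≠ 0 := fun i =>
      ne_zero_of_abs_sub_one_lt ((H i).trans (by norm_num))
    exact (exDist_ptolemy_eq_of_fst_ne H0 h).le
  have hdiag' : y₁.1 ≠ y₃.1 ∨ y₂.1 ≠ y₄.1 := by
    by_contra! hfst
    refine hdiag ⟨?_, ?_⟩
    · exact (eq_or_eq_antipode_of_fst_eq hfst.1).resolve_left (Ne.symm h13)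
    · exact (eq_or_eq_antipode_of_fst_eq hfst.2).resolve_left (Ne.symm h24)
  have hdiag_le : exDist a b c y₁ y₃ * exDist a b c y₂ y₄ ≤ 3 / 4 := by
    rcases hdiag' with h | h
    · simpa using mul_le_mul (exDist_mem_Icc_of_fst_ne H h).2 (exDist_mem_Icc_of_ne H h24).2
        (exDist_nonneg H _ _) (by norm_num)
    · simpa using mul_le_mul (exDist_mem_Icc_of_ne H h13).2 (exDist_mem_Icc_of_fst_ne H h).2
        (exDist_nonneg H _ _) (by norm_num)
  have hsides₁ := mul_le_mul (exDist_mem_Icc_of_ne H h12).1 (exDist_mem_Icc_of_ne H h34).1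
    (by norm_num) (exDist_nonneg H _ _)
  have hsides₂ := mul_le_mul (exDist_mem_Icc_of_ne H h23).1
    (exDist_mem_Icc_of_ne H (Ne.symm h14)).1 (by norm_num) (exDist_nonneg H _ _)
  linarith

end exDist

/-- For `a, b, c` close enough to `1`, the six-point space above is a metric space, it
satisfies the Ptolemy inequality, and for each of the three four-point configurations
`{eᵢ±, eⱼ±}` (`{i,j} = {1,2}, {2,3}, {3,1}`) equality holds in the Ptolemy inequality with
the antipodal pairs `eᵢ⁺eᵢ⁻`, `eⱼ⁺eⱼ⁻` as diagonals. -/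
theorem six_point_example :
    ∃ ε : ℝ, 0 < ε ∧ ∀ a b c : ℝ, |a - 1| < ε → |b - 1| < ε → |c - 1| < ε →
      (∀ p q, 0 ≤ exDist a b c p q) ∧
      (∀ p q, exDist a b c p q = exDist a b c q p) ∧
      (∀ p q, exDist a b c p q = 0 ↔ p = q) ∧
      (∀ p q r, exDist a b c p r ≤ exDist a b c p q + exDist a b c q r) ∧
      (∀ y₁ y₂ y₃ y₄, exDist a b c y₁ y₃ * exDist a b c y₂ y₄ ≤
        exDist a b c y₁ y₂ * exDist a b c y₃ y₄ +
          exDist a b c y₂ y₃ * exDist a b c y₄ y₁) ∧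
      (exDist a b c (0, true) (0, false) * exDist a b c (1, true) (1, false) =
        exDist a b c (0, true) (1, true) * exDist a b c (0, false) (1, false) +
          exDist a b c (1, true) (0, false) * exDist a b c (1, false) (0, true)) ∧
      (exDist a b c (1, true) (1, false) * exDist a b c (2, true) (2, false) =
        exDist a b c (1, true) (2, true) * exDist a b c (1, false) (2, false) +
          exDist a b c (2, true) (1, false) * exDist a b c (2, false) (1, true)) ∧
      (exDist a b c (2, true) (2, false) * exDist a b c (0, true) (0, false) =
        exDist a b c (2, true) (0, true) * exDist a b c (2, false) (0, false) +
          exDist a b c (0, true) (2, false) * exDist a b c (0, false) (2, true)) := by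
  refine ⟨1 / 20, by norm_num, fun a b c ha hb hc => ?_⟩
  have H : ∀ i, |![a, b, c] i - 1| < 1 / 20 := by
    intro i; fin_cases i <;> assumption
  have H0 : ∀ i, ![a, b, c] i ≠ 0 := fun i =>
    ne_zero_of_abs_sub_one_lt ((H i).trans (by norm_num))
  exact ⟨exDist_nonneg H, exDist_comm, fun _ _ => exDist_eq_zero_iff H, exDist_triangle H,
    exDist_ptolemy H, exDist_ptolemy_eq_of_fst_ne H0 (by decide),
    exDist_ptolemy_eq_of_fst_ne H0 (by decide), exDist_ptolemy_eq_of_fst_ne H0 (by decide)⟩
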